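/- Any minimizing sequence for X[φ] = −T[φ]^{D/(D−2)}/W[φ] that converges to the Fubini bounce can be modified by scale transformations φ_n(x) → s_n^{(D−2)/2} φ_n(s_n x), with s_n → ∞ (or s_n → 0), so that the new sequence is still minimizing (each term has unchanged T and W) but converges pointwise to zero almost everywhere; hence W is not continuous along such sequences (W of the limit is 0 while W[φ_n] < 0 is fixed). -/

import Mathlib

open MeasureTheory Real Filter Topology

noncomputable section

/-- The Fubini bounce `φ(x) = (2/|λ|)^{1/2} (Δ b / (|x|² + b²))^Δ`, `Δ = (D-2)/2`. -/
def fubiniBounce (D : ℕ) (lam b : ℝ) (x : EuclideanSpace ℝ (Fin D)) : ℝ :=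
  Real.sqrt (2 / |lam|) * ((((D : ℝ) - 2) / 2) * b / (‖x‖ ^ 2 + b ^ 2)) ^ (((D : ℝ) - 2) / 2)

/-!
Both integrands are homogeneous under `φ ↦ s^Δ φ(s ·)`, `Δ = (D-2)/2`, of exactly the degree
that the Jacobian `s^{-D}` of `y = s x` cancels, so `T` and `W` are scale invariant.

For a fixed scale `τ_k → ∞` the rescaled `φ_n` converge pointwise (as `n → ∞`) to the rescaled
bounce, which tends to zero off the origin as `k → ∞` because the bounce decays like
`|x|^{-(D-2)}`. A diagonal choice `k = K n → ∞` then works almost everywhere: Egorov's theorem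
on the sets of finite measure exhausting the space makes each convergence uniform off an
exceptional set, and if these sets have summable measure, almost every point eventually avoids
them (Borel–Cantelli).
-/

theorem Filter.exists_tendsto_atTop_eventually_diag {p : ℕ → ℕ → Prop}
    (hp : ∀ k, ∀ᶠ n in atTop, p k n) :
    ∃ K : ℕ → ℕ, Tendsto K atTop atTop ∧ ∀ᶠ n in atTop, p (K n) n := by
  classical
  have hq : ∀ k, ∀ᶠ n in atTop, ∀ j ≤ k, p j n := fun k =>
    (Set.finite_Iic k).eventually_all.2 fun j _ => hp j
  refine ⟨fun n => Nat.findGreatest (fun k => ∀ j ≤ k, p j n) n, ?_, ?_⟩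
  · refine tendsto_atTop_atTop.2 fun k => ?_
    obtain ⟨N, hN⟩ := eventually_atTop.1 (hq k)
    exact ⟨max N k, fun n hn =>
      Nat.le_findGreatest (le_of_max_le_right hn) (hN n (le_of_max_le_left hn))⟩
  · filter_upwards [hq 0] with n hn
    exact Nat.findGreatest_spec (P := fun k => ∀ j ≤ k, p j n) (Nat.zero_le n) hn _ le_rfl

namespace MeasureTheory

variable {α β : Type*} [MeasurableSpace α] [PseudoMetricSpace β] {μ : Measure α} [SigmaFinite μ]
  {f : ℕ → ℕ → α → β} {g : ℕ → α → β}

theorem exists_ae_eventually_mem_tendstoUniformlyOn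
    (hf : ∀ k n, StronglyMeasurable (f k n)) (hg : ∀ k, StronglyMeasurable (g k))
    (hfg : ∀ k, ∀ᵐ x ∂μ, Tendsto (fun n => f k n x) atTop (𝓝 (g k x))) :
    ∃ s : ℕ → Set α, (∀ᵐ x ∂μ, ∀ᶠ k in atTop, x ∈ s k) ∧
      ∀ k, TendstoUniformlyOn (f k) (g k) atTop (s k) := by
  have egorov k := tendstoUniformlyOn_of_ae_tendsto (hf k) (hg k)
    (measurableSet_spanningSets μ k) (measure_spanningSets_lt_top μ k).ne
    ((hfg k).mono fun x hx _ => hx) (ε := 2⁻¹ ^ k) (by positivity)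
  choose t _ _ ht_le ht_unif using egorov
  have ht_sum : (∑' k, μ (t k)) ≠ ⊤ := by
    refine (lt_of_le_of_lt (ENNReal.tsum_le_tsum ht_le) ?_).ne
    rw [← ENNReal.ofReal_tsum_of_nonneg (fun k => by positivity)
      (summable_geometric_of_lt_one (by norm_num) (by norm_num))]
    exact ENNReal.ofReal_lt_top
  refine ⟨fun k => spanningSets μ k \ t k, ?_, ht_unif⟩
  filter_upwards [ae_eventually_notMem ht_sum] with x hx
  exact (eventually_mem_spanningSets μ x).and hx

theorem exists_tendsto_atTop_ae_tendsto_diag {l : α → β}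
    (hf : ∀ k n, StronglyMeasurable (f k n)) (hg : ∀ k, StronglyMeasurable (g k))
    (hfg : ∀ k, ∀ᵐ x ∂μ, Tendsto (fun n => f k n x) atTop (𝓝 (g k x)))
    (hgl : ∀ᵐ x ∂μ, Tendsto (fun k => g k x) atTop (𝓝 (l x))) :
    ∃ K : ℕ → ℕ, Tendsto K atTop atTop ∧
      ∀ᵐ x ∂μ, Tendsto (fun n => f (K n) n x) atTop (𝓝 (l x)) := by
  obtain ⟨s, hs, hunif⟩ := exists_ae_eventually_mem_tendstoUniformlyOn hf hg hfg
  obtain ⟨K, hK, hKunif⟩ := Filter.exists_tendsto_atTop_eventually_diag fun k =>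
    Metric.tendstoUniformlyOn_iff.1 (hunif k) (1 / (k + 1)) Nat.one_div_pos_of_nat
  refine ⟨K, hK, ?_⟩
  filter_upwards [hs, hgl] with x hxs hxl
  refine (hxl.comp hK).congr_dist (squeeze_zero' (Eventually.of_forall fun n => dist_nonneg) ?_
    (tendsto_one_div_add_atTop_nhds_zero_nat.comp hK))
  filter_upwards [hK.eventually hxs, hKunif] with n hn hn'
  exact (hn' x hn).le

end MeasureTheory

theorem Real.mul_rpow_of_pos_left {a : ℝ} (ha : 0 < a) (b p : ℝ) :
    (a * b) ^ p = a ^ p * b ^ p := by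
  rcases lt_or_ge b 0 with hb | hb
  · rw [rpow_def_of_neg (mul_neg_of_pos_of_neg ha hb), rpow_def_of_neg hb, rpow_def_of_pos ha,
      log_mul ha.ne' hb.ne, add_mul, exp_add]
    ring
  · exact mul_rpow ha.le hb

section Scaling

variable {E : Type*} [NormedAddCommGroup E] [NormedSpace ℝ E] {s : ℝ}

theorem fderiv_const_mul_comp_smul (f : E → ℝ) (a : ℝ) (x : E) :
    fderiv ℝ (fun y => a * f (s • y)) x = (a * s) • fderiv ℝ f (s • x) := by
  change fderiv ℝ (a • fun y => f (s • y)) x = _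
  rw [fderiv_const_smul_field, Pi.smul_apply, fderiv_comp_smul, smul_smul]

variable [MeasurableSpace E] [BorelSpace E] [FiniteDimensional ℝ E] (μ : Measure E)
  [μ.IsAddHaarMeasure]

theorem integral_pow_finrank_mul_comp_smul (h : E → ℝ) (hs : 0 < s) :
    ∫ x, s ^ Module.finrank ℝ E * h (s • x) ∂μ = ∫ x, h x ∂μ := by
  rw [integral_const_mul, Measure.integral_comp_smul_of_nonneg μ h s (hR := hs.le), smul_eq_mul,
    mul_inv_cancel_left₀ (by positivity)]

theorem integral_mul_rpow_comp_scaling {Δ p : ℝ} (hΔp : Δ * p = Module.finrank ℝ E) (c : ℝ)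
    (f : E → ℝ) (hs : 0 < s) :
    ∫ x, c * (s ^ Δ * f (s • x)) ^ p ∂μ = ∫ x, c * f x ^ p ∂μ := by
  have hpoint (x : E) :
      c * (s ^ Δ * f (s • x)) ^ p = s ^ Module.finrank ℝ E * (c * f (s • x) ^ p) := by
    rw [mul_rpow_of_pos_left (rpow_pos_of_pos hs Δ), ← rpow_mul hs.le, hΔp, rpow_natCast]
    ring
  simp_rw [hpoint]
  exact integral_pow_finrank_mul_comp_smul μ (fun y => c * f y ^ p) hs

theorem integral_mul_norm_fderiv_sq_comp_scaling {Δ : ℝ} (hΔ : 2 * (Δ + 1) = Module.finrank ℝ E)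
    (c : ℝ) (f : E → ℝ) (hs : 0 < s) :
    ∫ x, c * ‖fderiv ℝ (fun y => s ^ Δ * f (s • y)) x‖ ^ 2 ∂μ
      = ∫ x, c * ‖fderiv ℝ f x‖ ^ 2 ∂μ := by
  have hscale : (s ^ Δ * s) ^ 2 = s ^ Module.finrank ℝ E := by
    rw [← rpow_add_one hs.ne', ← rpow_mul_natCast hs.le, ← rpow_natCast, ← hΔ]
    ring_nf
  have hpoint (x : E) : c * ‖fderiv ℝ (fun y => s ^ Δ * f (s • y)) x‖ ^ 2
      = s ^ Module.finrank ℝ E * (c * ‖fderiv ℝ f (s • x)‖ ^ 2) := by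
    rw [fderiv_const_mul_comp_smul, norm_smul, norm_of_nonneg (by positivity), mul_pow, hscale]
    ring
  simp_rw [hpoint]
  exact integral_pow_finrank_mul_comp_smul μ (fun y => c * ‖fderiv ℝ f y‖ ^ 2) hs

end Scaling

theorem tendsto_rpow_mul_fubiniBounce_smul {D : ℕ} (hD : 2 < D) (lam b : ℝ)
    {x : EuclideanSpace ℝ (Fin D)} (hx : x ≠ 0) :
    Tendsto (fun τ : ℝ => τ ^ (((D : ℝ) - 2) / 2) * fubiniBounce D lam b (τ • x))
      atTop (𝓝 0) := by
  set Δ : ℝ := ((D : ℝ) - 2) / 2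
  set C := Real.sqrt (2 / |lam|)
  have hΔ : 0 < Δ := div_pos (sub_pos.2 (by exact_mod_cast hD)) two_pos
  have hr : 0 < ‖x‖ ^ 2 := by positivity
  have hbound : ∀ᶠ τ in atTop, ‖τ ^ Δ * fubiniBounce D lam b (τ • x)‖
      ≤ C * (|Δ * b| / (τ * ‖x‖ ^ 2)) ^ Δ := by
    filter_upwards [eventually_gt_atTop 0] with τ hτ
    have hq : τ * |Δ * b / (‖τ • x‖ ^ 2 + b ^ 2)| ≤ |Δ * b| / (τ * ‖x‖ ^ 2) := by
      rw [norm_smul, norm_of_nonneg hτ.le, abs_div,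
        abs_of_pos (a := (τ * ‖x‖) ^ 2 + b ^ 2) (by positivity), mul_div_assoc',
        div_le_div_iff₀ (by positivity) (by positivity)]
      nlinarith [mul_nonneg (abs_nonneg (Δ * b)) (sq_nonneg b)]
    calc ‖τ ^ Δ * fubiniBounce D lam b (τ • x)‖
        = C * (τ ^ Δ * |(Δ * b / (‖τ • x‖ ^ 2 + b ^ 2)) ^ Δ|) := by
          rw [fubiniBounce, norm_mul, norm_mul, norm_of_nonneg (by positivity),
            norm_of_nonneg (by positivity), Real.norm_eq_abs]
          ring
      _ ≤ C * (τ * |Δ * b / (‖τ • x‖ ^ 2 + b ^ 2)|) ^ Δ := by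
          rw [mul_rpow hτ.le (abs_nonneg _)]
          gcongr
          exact abs_rpow_le_abs_rpow _ _
      _ ≤ C * (|Δ * b| / (τ * ‖x‖ ^ 2)) ^ Δ := by gcongr
  have hlim : Tendsto (fun τ : ℝ => C * (|Δ * b| / (τ * ‖x‖ ^ 2)) ^ Δ) atTop (𝓝 0) := by
    have h0 : Tendsto (fun τ : ℝ => |Δ * b| / (τ * ‖x‖ ^ 2)) atTop (𝓝 0) :=
      tendsto_const_nhds.div_atTop (tendsto_id.atTop_mul_const hr)
    simpa [zero_rpow hΔ.ne'] using
      ((continuousAt_rpow_const 0 Δ (Or.inr hΔ.le)).tendsto.comp h0).const_mul C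
  exact squeeze_zero_norm' hbound hlim

theorem scaling_escape_sequence_general (D : ℕ) (hD : 2 < D) (lam : ℝ)
    (b : ℝ) (W₀ : ℝ)
    (φ : ℕ → EuclideanSpace ℝ (Fin D) → ℝ)
    (hdiff : ∀ n, Differentiable ℝ (φ n))
    (hW : ∀ n, (∫ x : EuclideanSpace ℝ (Fin D),
      lam * (φ n x) ^ (2 * (D : ℝ) / ((D : ℝ) - 2))) = W₀)
    (hconv : ∀ x, Tendsto (fun n => φ n x) atTop (nhds (fubiniBounce D lam b x))) :
    ∃ s : ℕ → ℝ, (∀ n, 0 < s n) ∧ Tendsto s atTop atTop ∧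
      (∀ n, (∫ x : EuclideanSpace ℝ (Fin D),
          (1 / 2) * ‖fderiv ℝ
            (fun y => (s n) ^ (((D : ℝ) - 2) / 2) * φ n ((s n) • y)) x‖ ^ 2)
        = ∫ x : EuclideanSpace ℝ (Fin D), (1 / 2) * ‖fderiv ℝ (φ n) x‖ ^ 2) ∧
      (∀ n, (∫ x : EuclideanSpace ℝ (Fin D),
          lam * ((s n) ^ (((D : ℝ) - 2) / 2) * φ n ((s n) • x))
            ^ (2 * (D : ℝ) / ((D : ℝ) - 2))) = W₀) ∧
      (∀ᵐ x : EuclideanSpace ℝ (Fin D),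
        Tendsto (fun n => (s n) ^ (((D : ℝ) - 2) / 2) * φ n ((s n) • x)) atTop (nhds 0)) ∧
      (∫ _x : EuclideanSpace ℝ (Fin D),
          lam * ((0 : ℝ)) ^ (2 * (D : ℝ) / ((D : ℝ) - 2))) = 0 := by
  have hD' : (2 : ℝ) < D := by exact_mod_cast hD
  -- makes the space nontrivial, so that `volume` has no atoms
  have : NeZero D := ⟨by omega⟩
  have hfinrank : (Module.finrank ℝ (EuclideanSpace ℝ (Fin D)) : ℝ) = D := by
    rw [finrank_euclideanSpace_fin]
  set τ : ℕ → ℝ := fun k => k + 1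
  have hτ (k : ℕ) : 0 < τ k := k.cast_add_one_pos
  have hτ_top : Tendsto τ atTop atTop :=
    tendsto_atTop_add_const_right _ _ tendsto_natCast_atTop_atTop
  have hscaled_meas (k n : ℕ) :
      StronglyMeasurable fun x => τ k ^ (((D : ℝ) - 2) / 2) * φ n (τ k • x) :=
    (continuous_const.mul ((hdiff n).continuous.comp (continuous_const_smul _))).stronglyMeasurable
  have hscaled_conv (k : ℕ) (x : EuclideanSpace ℝ (Fin D)) :=
    (hconv (τ k • x)).const_mul (τ k ^ (((D : ℝ) - 2) / 2))
  obtain ⟨K, hK, hK_ae⟩ := exists_tendsto_atTop_ae_tendsto_diag (μ := volume) (l := fun _ => 0)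
    hscaled_meas
    (fun k => stronglyMeasurable_of_tendsto atTop (hscaled_meas k)
      (tendsto_pi_nhds.2 (hscaled_conv k)))
    (fun k => ae_of_all _ (hscaled_conv k))
    (by
      filter_upwards [volume.ae_ne 0] with x hx
      exact (tendsto_rpow_mul_fubiniBounce_smul hD lam b hx).comp hτ_top)
  refine ⟨fun n => τ (K n), fun n => hτ _, hτ_top.comp hK,
    fun n => integral_mul_norm_fderiv_sq_comp_scaling volume ?_ _ _ (hτ _),
    fun n => (integral_mul_rpow_comp_scaling volume ?_ _ _ (hτ _)).trans (hW n), hK_ae, ?_⟩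
  · rw [hfinrank]; ring
  · rw [hfinrank]; field_simp [(by linarith : (D : ℝ) - 2 ≠ 0)]
  · rw [zero_rpow (div_pos (by linarith) (by linarith)).ne', mul_zero, integral_zero]

/-- Any minimizing sequence with fixed `W[φ_n] = W₀ < 0` converging to the Fubini bounce can
be modified by scale transformations `φ_n(x) ↦ s_n^{(D−2)/2} φ_n(s_n x)` with `s_n → ∞` so
that `T` and `W` are unchanged at every step but the new sequence converges pointwise to zero
almost everywhere; hence `W` is not continuous along such sequences (the limit has `W = 0`
while `W[φ_n] = W₀ < 0`). -/
theorem scaling_escape_sequence (D : ℕ) (hD : 2 < D) (lam : ℝ) (hlam : lam < 0)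
    (b : ℝ) (hb : 0 < b) (W₀ : ℝ) (hW₀ : W₀ < 0)
    (φ : ℕ → EuclideanSpace ℝ (Fin D) → ℝ)
    (hdiff : ∀ n, Differentiable ℝ (φ n))
    (hKint : ∀ n, Integrable
      (fun x : EuclideanSpace ℝ (Fin D) => (1 / 2) * ‖fderiv ℝ (φ n) x‖ ^ 2))
    (hWint : ∀ n, Integrable
      (fun x : EuclideanSpace ℝ (Fin D) => lam * (φ n x) ^ (2 * (D : ℝ) / ((D : ℝ) - 2))))
    (hW : ∀ n, (∫ x : EuclideanSpace ℝ (Fin D),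
      lam * (φ n x) ^ (2 * (D : ℝ) / ((D : ℝ) - 2))) = W₀)
    (hconv : ∀ x, Tendsto (fun n => φ n x) atTop (nhds (fubiniBounce D lam b x))) :
    ∃ s : ℕ → ℝ, (∀ n, 0 < s n) ∧ Tendsto s atTop atTop ∧
      (∀ n, (∫ x : EuclideanSpace ℝ (Fin D),
          (1 / 2) * ‖fderiv ℝ
            (fun y => (s n) ^ (((D : ℝ) - 2) / 2) * φ n ((s n) • y)) x‖ ^ 2)
        = ∫ x : EuclideanSpace ℝ (Fin D), (1 / 2) * ‖fderiv ℝ (φ n) x‖ ^ 2) ∧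
      (∀ n, (∫ x : EuclideanSpace ℝ (Fin D),
          lam * ((s n) ^ (((D : ℝ) - 2) / 2) * φ n ((s n) • x))
            ^ (2 * (D : ℝ) / ((D : ℝ) - 2))) = W₀) ∧
      (∀ᵐ x : EuclideanSpace ℝ (Fin D),
        Tendsto (fun n => (s n) ^ (((D : ℝ) - 2) / 2) * φ n ((s n) • x)) atTop (nhds 0)) ∧
      (∫ _x : EuclideanSpace ℝ (Fin D),
          lam * ((0 : ℝ)) ^ (2 * (D : ℝ) / ((D : ℝ) - 2))) = 0 :=
  scaling_escape_sequence_general D hD lam b W₀ φ hdiff hW hconv
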